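/- arXiv:2008.05003 — 2 statements merged into one kernel-verified Lean document; each statement's English description precedes it below -/
import Mathlib

section
/- Let Φ: B → A be a *-homomorphism between C*-algebras, and suppose both carry strongly continuous circle actions β on B and γ on A with Φ ∘ β_z = γ_z ∘ Φ for all z ∈ 𝕋. If Φ is injective on the fixed-point algebra B^β, then Φ is injective on B. -/
/-!
Averaging over the circle, `E b = ∫ β_z b dz`, lands in the fixed-point algebra, and it is
faithful: `E (b⋆ b) = ∫ (β_z b)⋆ (β_z b) dz` is the integral of a continuous positive function,
so it vanishes only if `b = 0`, because Haar measure charges every open set. If `Φ b = 0`, then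
equivariance and continuity of `Φ` give `Φ (E (b⋆ b)) = ∫ γ_z (Φ (b⋆ b)) dz = 0`, so injectivity
on the fixed-point algebra forces `E (b⋆ b) = 0`, hence `b = 0`.
-/

open MeasureTheory
open scoped CStarAlgebra

theorem ContinuousLinearMapClass.map_integral {X E G F : Type*} [MeasurableSpace X]
    {μ : Measure X} [NormedAddCommGroup E] [NormedSpace ℂ E] [CompleteSpace E]
    [NormedAddCommGroup G] [NormedSpace ℂ G] [CompleteSpace G]
    [FunLike F E G] [ContinuousLinearMapClass F ℂ E G] (L : F) {f : X → E}
    (hf : Integrable f μ) : L (∫ x, f x ∂μ) = ∫ x, L (f x) ∂μ :=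
  (ContinuousLinearMap.integral_comp_comm ⟨(L : E →ₗ[ℂ] G), map_continuous L⟩ hf).symm

theorem Continuous.eq_zero_of_integral_eq_zero_of_nonneg
    {X E : Type*} [TopologicalSpace X] [MeasurableSpace X] [OpensMeasurableSpace X]
    {μ : Measure X} [SigmaFinite μ] [μ.IsOpenPosMeasure]
    [NormedAddCommGroup E] [NormedSpace ℝ E] [CompleteSpace E] [PartialOrder E]
    [IsOrderedAddMonoid E] [IsOrderedModule ℝ E] [ClosedIciTopology E]
    {f : X → E} (hf : Continuous f) (hfi : Integrable f μ) (hf_nonneg : 0 ≤ f)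
    (hf_int : ∫ x, f x ∂μ = 0) : f = 0 := by
  have hset : ∀ s, MeasurableSet s → μ s < ⊤ → ∫ x in s, f x ∂μ = 0 := fun s hs _ ↦ by
    have hsum : ∫ x in s, f x ∂μ + ∫ x in sᶜ, f x ∂μ = 0 := by
      rw [integral_add_compl hs hfi, hf_int]
    exact ((add_eq_zero_iff_of_nonneg (integral_nonneg hf_nonneg)
      (integral_nonneg hf_nonneg)).mp hsum).1
  have hae : f =ᵐ[μ] 0 :=
    ae_eq_zero_of_forall_setIntegral_eq_of_sigmaFinite (fun _ _ _ ↦ hfi.integrableOn) hset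
  exact (hf.ae_eq_iff_eq μ continuous_const).mp hae

theorem CStarRing.eq_zero_of_integral_star_mul_self_eq_zero
    {X B : Type*} [TopologicalSpace X] [MeasurableSpace X] [OpensMeasurableSpace X]
    {μ : Measure X} [SigmaFinite μ] [μ.IsOpenPosMeasure] [NonUnitalCStarAlgebra B]
    {f : X → B} (hf : Continuous f) (hfi : Integrable (fun x ↦ star (f x) * f x) μ)
    (hf_int : ∫ x, star (f x) * f x ∂μ = 0) : f = 0 := by
  -- A non-unital C⋆-algebra carries no global order instance; use the spectral order.
  let _ := CStarAlgebra.spectralOrder B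
  have _ := CStarAlgebra.spectralOrderedRing B
  have h := (hf.star.mul hf).eq_zero_of_integral_eq_zero_of_nonneg hfi
    (fun x ↦ star_mul_self_nonneg (f x)) hf_int
  funext x
  exact CStarRing.star_mul_self_eq_zero_iff _ |>.mp (congrFun h x)

section Averaging

variable {G B : Type*} [MeasurableSpace G] [NonUnitalCStarAlgebra B]
  (β : G → B ≃⋆ₐ[ℂ] B) (μ : Measure G)

noncomputable def actionAverage (b : B) : B := ∫ g, β g b ∂μ

variable {β μ}

theorem integrable_orbit [TopologicalSpace G] [CompactSpace G] [OpensMeasurableSpace G]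
    [IsFiniteMeasure μ] (hβcont : ∀ b : B, Continuous fun g ↦ β g b) (b : B) :
    Integrable (fun g ↦ β g b) μ :=
  (hβcont b).integrable_of_hasCompactSupport (HasCompactSupport.of_compactSpace _)

theorem apply_actionAverage [Group G] [MeasurableMul G] [μ.IsMulLeftInvariant]
    (hβmul : ∀ g h b, β (g * h) b = β g (β h b)) {b : B} (hb : Integrable (fun g ↦ β g b) μ)
    (g : G) : β g (actionAverage β μ b) = actionAverage β μ b := calc
  β g (actionAverage β μ b) = ∫ h, β g (β h b) ∂μ :=
    ContinuousLinearMapClass.map_integral (β g) hb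
  _ = ∫ h, β (g * h) b ∂μ := by simp only [hβmul]
  _ = actionAverage β μ b := integral_mul_left_eq_self (fun h ↦ β h b) g

theorem map_actionAverage_eq_zero {A : Type*} [NonUnitalCStarAlgebra A] (Φ : B →⋆ₙₐ[ℂ] A)
    {b : B} (hb : Integrable (fun g ↦ β g b) μ) (hΦ : ∀ g, Φ (β g b) = 0) :
    Φ (actionAverage β μ b) = 0 := calc
  Φ (actionAverage β μ b) = ∫ g, Φ (β g b) ∂μ :=
    ContinuousLinearMapClass.map_integral Φ hb
  _ = 0 := by simp only [hΦ, integral_zero]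

theorem eq_zero_of_actionAverage_star_mul_self_eq_zero [Nonempty G] [TopologicalSpace G]
    [CompactSpace G] [OpensMeasurableSpace G] [IsFiniteMeasure μ] [μ.IsOpenPosMeasure]
    (hβcont : ∀ b : B, Continuous fun g ↦ β g b) {b : B}
    (hb : actionAverage β μ (star b * b) = 0) : b = 0 := by
  have horbit : (fun g ↦ β g b) = 0 := by
    refine CStarRing.eq_zero_of_integral_star_mul_self_eq_zero (μ := μ) (hβcont b) ?_ ?_ <;>
      simp only [← map_star, ← map_mul]
    exacts [integrable_orbit hβcont _, hb]
  obtain ⟨g⟩ := ‹Nonempty G›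
  simpa using congrFun horbit g

end Averaging

theorem equivariant_hom_injective_on_fixed_algebra_implies_injective_general
    {B : Type*} [NonUnitalNormedRing B] [StarRing B] [CStarRing B]
    [NormedSpace ℂ B] [IsScalarTower ℂ B B] [SMulCommClass ℂ B B] [StarModule ℂ B]
    [CompleteSpace B]
    {A : Type*} [NonUnitalNormedRing A] [StarRing A] [CStarRing A]
    [NormedSpace ℂ A] [IsScalarTower ℂ A A] [SMulCommClass ℂ A A] [StarModule ℂ A]
    [CompleteSpace A]
    (β : Circle → (B ≃⋆ₐ[ℂ] B))
    (hβmul : ∀ z w b, β (z * w) b = β z (β w b))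
    (hβcont : ∀ b : B, Continuous fun z => β z b)
    (γ : Circle → (A ≃⋆ₐ[ℂ] A))
    (Φ : B →⋆ₙₐ[ℂ] A)
    (hequiv : ∀ z b, Φ (β z b) = γ z (Φ b))
    (hinj : ∀ b : B, (∀ z, β z b = b) → Φ b = 0 → b = 0) :
    Function.Injective Φ := by
  let _ : NonUnitalCStarAlgebra B := ⟨⟩
  let _ : NonUnitalCStarAlgebra A := ⟨⟩
  borelize Circle
  let μ : Measure Circle := Measure.haarMeasure ⊤
  refine (injective_iff_map_eq_zero Φ).2 fun b hb ↦
    eq_zero_of_actionAverage_star_mul_self_eq_zero (μ := μ) hβcont (hinj _ ?_ ?_)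
  · exact apply_actionAverage hβmul (integrable_orbit hβcont _)
  · refine map_actionAverage_eq_zero Φ (integrable_orbit hβcont _) fun z ↦ ?_
    rw [hequiv, map_mul, map_star, hb, star_zero, zero_mul, map_zero]

/-- Gauge-invariant uniqueness principle: a circle-equivariant *-homomorphism between
C*-algebras carrying strongly continuous circle actions which is injective on the
fixed-point algebra is injective. -/
theorem equivariant_hom_injective_on_fixed_algebra_implies_injective
    {B : Type*} [NonUnitalNormedRing B] [StarRing B] [CStarRing B]
    [NormedSpace ℂ B] [IsScalarTower ℂ B B] [SMulCommClass ℂ B B] [StarModule ℂ B]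
    [CompleteSpace B]
    {A : Type*} [NonUnitalNormedRing A] [StarRing A] [CStarRing A]
    [NormedSpace ℂ A] [IsScalarTower ℂ A A] [SMulCommClass ℂ A A] [StarModule ℂ A]
    [CompleteSpace A]
    (β : Circle → (B ≃⋆ₐ[ℂ] B))
    (hβ1 : ∀ b, β 1 b = b)
    (hβmul : ∀ z w b, β (z * w) b = β z (β w b))
    (hβcont : ∀ b : B, Continuous fun z => β z b)
    (γ : Circle → (A ≃⋆ₐ[ℂ] A))
    (hγ1 : ∀ a, γ 1 a = a)
    (hγmul : ∀ z w a, γ (z * w) a = γ z (γ w a))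
    (hγcont : ∀ a : A, Continuous fun z => γ z a)
    (Φ : B →⋆ₙₐ[ℂ] A)
    (hequiv : ∀ z b, Φ (β z b) = γ z (Φ b))
    (hinj : ∀ b : B, (∀ z, β z b = b) → Φ b = 0 → b = 0) :
    Function.Injective Φ :=
  equivariant_hom_injective_on_fixed_algebra_implies_injective_general β hβmul hβcont γ Φ hequiv
    hinj
end

section
/- Let {T_i}_{i∈I} be partial isometries on a Hilbert space with mutually orthogonal final projections satisfying T_i* T_i = Σ_{j∈I} A_{ij} T_j T_j* (SOT) for a 0-1 matrix A. Suppose there is a finite set Y ⊆ I such that A(∅, Y, j) := ∏_{y∈Y}(1 − A_{yj}) is zero for all but finitely many j ∈ I, and let J₂ = {j : A(∅,Y,j) ≠ 0} (a finite set). Then, by inclusion–exclusion, Σ_{∅≠Z⊆Y} (−1)^{|Z|+1} ∏_{z∈Z} T_z* T_z = Σ_{j : A(∅,Y,j)=0} T_j T_j* in the strong operator topology, and the element U = Σ_{∅≠Z⊆Y} (−1)^{|Z|+1} ∏_{z∈Z} T_z* T_z + Σ_{j∈J₂} T_j T_j* satisfies U T_i = T_i = T_i U for all i ∈ I. -/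
/-!
Write `Qⱼ = TⱼTⱼ*` and `Pᵢ = Tᵢ*Tᵢ`. Since the `Qⱼ` are orthogonal idempotents, the relation
`Pᵢ = Σⱼ Aᵢⱼ Qⱼ` collapses against a single `Qₖ`: `PᵢQₖ = QₖPᵢ = AᵢₖQₖ`. Hence `∏_{z∈Z} P_z`
acts on `Qₖ` as the scalar `∏_{z∈Z} A_zk`, and by inclusion–exclusion `S` acts on `Qₖ` as
`1 - A(∅,Y,k) ∈ {0,1}`; summing over `k` gives the first claim. The same computation shows
`UQₖ = Qₖ` for every `k`, so `UTᵢ = UQᵢTᵢ = Tᵢ`. Finally `Pᵢ` commutes with `U` and is a strong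
limit of combinations of the `Qⱼ`, so `PᵢU = UPᵢ = Pᵢ` and `TᵢU = TᵢPᵢU = Tᵢ`.
-/

open Filter ContinuousLinearMap

namespace Finset

theorem sum_filter_nonempty_powerset_neg_one_pow_mul_prod {ι R : Type*} [CommRing R]
    (s : Finset ι) (f : ι → R) :
    ∑ t ∈ s.powerset.filter Finset.Nonempty, (-1) ^ (#t + 1) * ∏ i ∈ t, f i
      = 1 - ∏ i ∈ s, (1 - f i) := by
  classical
  have hsplit := sum_filter_add_sum_filter_not s.powerset Finset.Nonempty
    fun t => (-1 : R) ^ #t * ∏ i ∈ t, f i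
  have hempty : s.powerset.filter (fun t => ¬ t.Nonempty) = {∅} := by
    ext t; simp +contextual [not_nonempty_iff_eq_empty]
  rw [hempty, sum_singleton, prod_empty, card_empty, pow_zero, mul_one] at hsplit
  simp only [prod_sub, prod_const_one, mul_one, ← hsplit, pow_succ, mul_neg_one, neg_mul,
    sum_neg_distrib]
  ring

theorem prod_one_sub_eq_zero_or_eq_one {ι R : Type*} [CommRing R] {s : Finset ι}
    {f : ι → R} (hf : ∀ i ∈ s, f i = 0 ∨ f i = 1) :
    ∏ i ∈ s, (1 - f i) = 0 ∨ ∏ i ∈ s, (1 - f i) = 1 := by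
  refine prod_induction _ (fun x => x = 0 ∨ x = 1) ?_ (Or.inr rfl) fun i hi => ?_
  · rintro x y (rfl | rfl) (rfl | rfl) <;> simp
  · rcases hf i hi with h | h <;> simp [h]

theorem noncommProd_mul_eq_smul {ι 𝕜 R : Type*} [CommSemiring 𝕜] [Semiring R] [Algebra 𝕜 R]
    (s : Finset ι) (f : ι → R) (comm) {q : R} {c : ι → 𝕜} (h : ∀ i, f i * q = c i • q) :
    s.noncommProd f comm * q = (∏ i ∈ s, c i) • q := by
  classical
  induction s using Finset.induction_on with
  | empty => simp
  | insert a s ha ih =>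
    rw [noncommProd_insert_of_notMem _ _ _ _ ha, mul_assoc, ih, mul_smul_comm, h, smul_smul,
      prod_insert ha, mul_comm]

end Finset

section InclusionExclusion

variable (𝕜 : Type*) {I R : Type*} [CommRing 𝕜] [Ring R] [Algebra 𝕜 R]

/-- For commuting projections `P y` this is `1 - ∏ y ∈ Y, (1 - P y)`, the projection onto the
join of their ranges. -/
def inclusionExclusionSum (P : I → R) (Y : Finset I) (hcomm : ∀ i j, Commute (P i) (P j)) : R :=
  ∑ Z ∈ Y.powerset.filter Finset.Nonempty,
    (-1 : 𝕜) ^ (Z.card + 1) • Z.noncommProd P (fun a _ b _ _ => hcomm a b)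

variable {𝕜} {P : I → R} {Y : Finset I} {hcomm : ∀ i j, Commute (P i) (P j)}

theorem inclusionExclusionSum_mul_eq_smul {q : R} {c : I → 𝕜} (h : ∀ i, P i * q = c i • q) :
    inclusionExclusionSum 𝕜 P Y hcomm * q = (1 - ∏ y ∈ Y, (1 - c y)) • q := by
  rw [inclusionExclusionSum, Finset.sum_mul,
    ← Finset.sum_filter_nonempty_powerset_neg_one_pow_mul_prod, Finset.sum_smul]
  refine Finset.sum_congr rfl fun Z _ => ?_
  rw [smul_mul_assoc, mul_smul, ← Finset.noncommProd_mul_eq_smul Z P (fun a _ b _ _ => hcomm a b) h]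

theorem commute_inclusionExclusionSum (i : I) :
    Commute (P i) (inclusionExclusionSum 𝕜 P Y hcomm) :=
  Commute.sum_right _ _ _ fun _ _ =>
    (Finset.noncommProd_commute _ _ _ _ fun j _ => hcomm i j).smul_right _

end InclusionExclusion

section StrongOperatorSums

variable {𝕜 H I : Type*} [CommRing 𝕜] [AddCommGroup H] [Module 𝕜 H] [TopologicalSpace H]
  [T2Space H] {Q : I → H →L[𝕜] H} {X : H →L[𝕜] H} {a : I → 𝕜}

theorem mul_eq_self_of_hasSum {U : H →L[𝕜] H} (hU : ∀ j, U * Q j = Q j)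
    (hX : ∀ ξ, HasSum (fun j => a j • Q j ξ) (X ξ)) : U * X = X := by
  ext ξ
  refine ((hX ξ).mapL U).unique ?_
  simpa only [map_smul, ← mul_apply_eq_comp, hU] using hX ξ

variable [IsTopologicalAddGroup H] [ContinuousConstSMul 𝕜 H]

namespace OrthogonalIdempotents

theorem hasSum_mul_eq_smul (hQ : OrthogonalIdempotents Q)
    (hX : ∀ ξ, HasSum (fun j => a j • Q j ξ) (X ξ)) (k : I) : X * Q k = a k • Q k := by
  ext ξ
  refine (hX (Q k ξ)).unique ?_
  convert hasSum_single (f := fun j => a j • Q j (Q k ξ)) k fun j hj => ?_ using 1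
  · rw [← mul_apply_eq_comp, (hQ.idem k).eq, smul_apply]
  · rw [← mul_apply_eq_comp, hQ.ortho hj, zero_apply, smul_zero]

theorem mul_hasSum_eq_smul (hQ : OrthogonalIdempotents Q)
    (hX : ∀ ξ, HasSum (fun j => a j • Q j ξ) (X ξ)) (k : I) : Q k * X = a k • Q k := by
  ext ξ
  refine ((hX ξ).mapL (Q k)).unique ?_
  convert hasSum_single (f := fun j => Q k (a j • Q j ξ)) k fun j hj => ?_ using 1
  · rw [map_smul, ← mul_apply_eq_comp, (hQ.idem k).eq, smul_apply]
  · rw [map_smul, ← mul_apply_eq_comp, hQ.ortho hj.symm, zero_apply, smul_zero]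

variable {A : I → I → 𝕜} {P : I → H →L[𝕜] H}

theorem hasSum_noncommProd_apply (hQ : OrthogonalIdempotents Q)
    (hP : ∀ i ξ, HasSum (fun j => A i j • Q j ξ) (P i ξ)) {Z : Finset I} (hZ : Z.Nonempty)
    (comm) (ξ : H) :
    HasSum (fun j => (∏ z ∈ Z, A z j) • Q j ξ) (Z.noncommProd P comm ξ) := by
  classical
  obtain ⟨z, hz⟩ := hZ
  rw [← Finset.noncommProd_erase_mul Z hz P comm, mul_apply_eq_comp]
  convert (hP z ξ).mapL ((Z.erase z).noncommProd P (comm.mono (Z.erase_subset z))) using 2 with j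
  rw [map_smul, ← mul_apply_eq_comp,
    Finset.noncommProd_mul_eq_smul _ _ _ fun i => hQ.hasSum_mul_eq_smul (hP i) j,
    smul_apply, smul_smul, Finset.mul_prod_erase Z (A · j) hz]

theorem hasSum_inclusionExclusionSum_apply (hQ : OrthogonalIdempotents Q)
    (hP : ∀ i ξ, HasSum (fun j => A i j • Q j ξ) (P i ξ)) {Y : Finset I}
    {hcomm : ∀ i j, Commute (P i) (P j)} (ξ : H) :
    HasSum (fun j => (1 - ∏ y ∈ Y, (1 - A y j)) • Q j ξ) (inclusionExclusionSum 𝕜 P Y hcomm ξ) := by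
  simp only [inclusionExclusionSum, sum_apply, smul_apply,
    ← Finset.sum_filter_nonempty_powerset_neg_one_pow_mul_prod, Finset.sum_smul, mul_smul]
  exact hasSum_sum fun Z hZ =>
    (hQ.hasSum_noncommProd_apply hP (Finset.mem_filter.mp hZ).2 _ ξ).const_smul _

end OrthogonalIdempotents

end StrongOperatorSums

open scoped Classical in
theorem exel_laca_unit_general
    {H : Type*} [NormedAddCommGroup H] [InnerProductSpace ℂ H] [CompleteSpace H]
    {I : Type*} (T : I → H →L[ℂ] H) (A : I → I → ℂ)
    (hA : ∀ i j, A i j = 0 ∨ A i j = 1)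
    (hpi : ∀ i, T i ∘L adjoint (T i) ∘L T i = T i)
    (horth : ∀ i j, i ≠ j → (T i ∘L adjoint (T i)) ∘L (T j ∘L adjoint (T j)) = 0)
    (hcomm : ∀ i j, Commute (adjoint (T i) ∘L T i) (adjoint (T j) ∘L T j))
    (hCK : ∀ i, ∀ ξ : H,
      Tendsto (fun F : Finset I => ∑ j ∈ F, A i j • ((T j ∘L adjoint (T j)) ξ))
        atTop (nhds ((adjoint (T i) ∘L T i) ξ)))
    (Y : Finset I) (J₂ : Finset I)
    (hJ₂ : ∀ j, j ∈ J₂ ↔ ∏ y ∈ Y, (1 - A y j) ≠ 0)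
    (S U : H →L[ℂ] H)
    (hS : S = ∑ Z ∈ Y.powerset.filter Finset.Nonempty,
      ((-1 : ℂ)) ^ (Z.card + 1) •
        Z.noncommProd (fun z => adjoint (T z) ∘L T z) (fun a _ b _ _ => hcomm a b))
    (hU : U = S + ∑ j ∈ J₂, T j ∘L adjoint (T j)) :
    (∀ ξ : H,
      Tendsto (fun F : Finset I =>
          ∑ j ∈ F.filter (fun j => ∏ y ∈ Y, (1 - A y j) = 0), (T j ∘L adjoint (T j)) ξ)
        atTop (nhds (S ξ))) ∧
    (∀ i, U ∘L T i = T i ∧ T i ∘L U = T i) := by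
  set Q : I → H →L[ℂ] H := fun j => T j * adjoint (T j)
  set P : I → H →L[ℂ] H := fun i => adjoint (T i) * T i
  replace hS : S = inclusionExclusionSum ℂ P Y hcomm := hS
  replace hU : U = S + ∑ j ∈ J₂, Q j := hU
  have hTP : ∀ i, T i * P i = T i := hpi
  have hQT : ∀ i, Q i * T i = T i := fun i => (mul_assoc _ _ _).trans (hTP i)
  have hQ : OrthogonalIdempotents Q :=
    ⟨fun i => by simp only [IsIdempotentElem, Q, ← mul_assoc, hQT], horth⟩
  have hPQ : ∀ i j, P i * Q j = A i j • Q j := fun i => hQ.hasSum_mul_eq_smul (hCK i)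
  have hQP : ∀ i j, Q j * P i = A i j • Q j := fun i => hQ.mul_hasSum_eq_smul (hCK i)
  have ha : ∀ j, ∏ y ∈ Y, (1 - A y j) = 0 ∨ ∏ y ∈ Y, (1 - A y j) = 1 :=
    fun j => Finset.prod_one_sub_eq_zero_or_eq_one fun y _ => hA y j
  have hUQ : ∀ k, U * Q k = Q k := by
    intro k
    rw [hU, hS, add_mul, inclusionExclusionSum_mul_eq_smul (hPQ · k), Finset.sum_mul,
      Finset.sum_congr rfl fun j _ => hQ.mul_eq j k, Finset.sum_ite_eq']
    rcases ha k with h | h <;> simp [h, hJ₂]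
  have hUP : ∀ i, P i * U = P i := by
    intro i
    have hPU : Commute (P i) U := by
      rw [hU, hS]
      exact (commute_inclusionExclusionSum i).add_right
        (Commute.sum_right _ _ _ fun j _ => (hPQ i j).trans (hQP i j).symm)
    rw [hPU.eq]
    exact mul_eq_self_of_hasSum hUQ (hCK i)
  refine ⟨fun ξ => ?_, fun i => ⟨?_, ?_⟩⟩
  · have hcoeff : ∀ j, (1 - ∏ y ∈ Y, (1 - A y j)) • Q j ξ =
        if ∏ y ∈ Y, (1 - A y j) = 0 then Q j ξ else 0 := fun j => by
      rcases ha j with h | h <;> simp [h]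
    have key := hQ.hasSum_inclusionExclusionSum_apply hCK (hcomm := hcomm) (Y := Y) ξ
    simp only [hcoeff] at key
    simp only [hS, Finset.sum_filter]
    exact key
  · change U * T i = T i
    rw [← hQT, ← mul_assoc, hUQ]
  · change T i * U = T i
    rw [← hTP, mul_assoc, hUP]

open scoped Classical in
/-- If the final projections of the `T i` are mutually orthogonal and the Exel–Laca
relation CK holds in the strong operator topology, and if `A(∅,Y,j) = ∏_{y∈Y}(1-A_{yj})`
vanishes for all but finitely many `j` (with `J₂` the finite exceptional set), then, by
inclusion–exclusion, `Σ_{∅≠Z⊆Y} (-1)^{|Z|+1} ∏_{z∈Z} T_z*T_z = Σ_{j : A(∅,Y,j)=0} T_jT_j*`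
in the strong operator topology, and the element
`U = Σ_{∅≠Z⊆Y} (-1)^{|Z|+1} ∏_{z∈Z} T_z*T_z + Σ_{j∈J₂} T_jT_j*` is a unit for the `T i`. -/
theorem exel_laca_unit
    {H : Type*} [NormedAddCommGroup H] [InnerProductSpace ℂ H] [CompleteSpace H]
    {I : Type*} (T : I → H →L[ℂ] H) (A : I → I → ℂ)
    (hA : ∀ i j, A i j = 0 ∨ A i j = 1)
    (hrows : ∀ i, ∃ j, A i j = 1)
    (hpi : ∀ i, T i ∘L adjoint (T i) ∘L T i = T i)
    (horth : ∀ i j, i ≠ j → (T i ∘L adjoint (T i)) ∘L (T j ∘L adjoint (T j)) = 0)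
    (hcomm : ∀ i j, Commute (adjoint (T i) ∘L T i) (adjoint (T j) ∘L T j))
    (hCK : ∀ i, ∀ ξ : H,
      Tendsto (fun F : Finset I => ∑ j ∈ F, A i j • ((T j ∘L adjoint (T j)) ξ))
        atTop (nhds ((adjoint (T i) ∘L T i) ξ)))
    (Y : Finset I) (J₂ : Finset I)
    (hJ₂ : ∀ j, j ∈ J₂ ↔ ∏ y ∈ Y, (1 - A y j) ≠ 0)
    (S U : H →L[ℂ] H)
    (hS : S = ∑ Z ∈ Y.powerset.filter Finset.Nonempty,
      ((-1 : ℂ)) ^ (Z.card + 1) •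
        Z.noncommProd (fun z => adjoint (T z) ∘L T z) (fun a _ b _ _ => hcomm a b))
    (hU : U = S + ∑ j ∈ J₂, T j ∘L adjoint (T j)) :
    (∀ ξ : H,
      Tendsto (fun F : Finset I =>
          ∑ j ∈ F.filter (fun j => ∏ y ∈ Y, (1 - A y j) = 0), (T j ∘L adjoint (T j)) ξ)
        atTop (nhds (S ξ))) ∧
    (∀ i, U ∘L T i = T i ∧ T i ∘L U = T i) :=
  exel_laca_unit_general T A hA hpi horth hcomm hCK Y J₂ hJ₂ S U hS hU
end
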